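/- Let Y be a finite vertex-transitive graph on r vertices which is a core, and let Γ = n·Y be the disjoint union of n ≥ 2 copies of Y. Then Hull(Γ) = n·K_r: two distinct vertices of Γ are collapsed by some endomorphism of Γ iff they lie in different copies of Y. -/

import Mathlib

def isEnd {V : Type*} (X : SimpleGraph V) (f : V → V) : Prop :=
  ∀ v w, X.Adj v w → X.Adj (f v) (f w)

/-- The disjoint union of n copies of the graph Y. -/
def nCopies {V : Type*} (n : ℕ) (Y : SimpleGraph V) : SimpleGraph (Fin n × V) where
  Adj v w := v.1 = w.1 ∧ Y.Adj v.2 w.2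
  symm := ⟨fun v w h => ⟨h.1.symm, Y.symm.symm _ _ h.2⟩⟩
  loopless := ⟨fun v h => Y.loopless.irrefl _ h.2⟩

/-!
Restricting an endomorphism of `n·Y` to the `i`-th copy and projecting to `Y` gives an
endomorphism of `Y`, which is injective because `Y` is a core; so no two vertices of one copy
are collapsed. Conversely, mapping copy `i` onto copy `j` through an automorphism of `Y` that
sends `a` to `b`, and fixing all other copies, collapses `(i, a)` with `(j, b)`.
-/

section nCopies

variable {V : Type*} {Y : SimpleGraph V} {n : ℕ}

theorem isEnd_snd_comp_copy {f : Fin n × V → Fin n × V} (hf : isEnd (nCopies n Y) f)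
    (i : Fin n) : isEnd Y (fun a => (f (i, a)).2) :=
  fun a b hab => (hf (i, a) (i, b) ⟨rfl, hab⟩).2

theorem fst_ne_of_isEnd_nCopies_collapse (hinj : ∀ g, isEnd Y g → Function.Injective g)
    {f : Fin n × V → Fin n × V} (hf : isEnd (nCopies n Y) f) {v w : Fin n × V}
    (hvw : v ≠ w) (hcollapse : f v = f w) : v.1 ≠ w.1 := by
  obtain ⟨i, a⟩ := v
  obtain ⟨j, b⟩ := w
  rintro rfl
  have hab : a = b := hinj _ (isEnd_snd_comp_copy hf i) (congrArg Prod.snd hcollapse)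
  exact hvw (by rw [hab])

def foldCopy (i j : Fin n) (g : V → V) (p : Fin n × V) : Fin n × V :=
  if p.1 = i then (j, g p.2) else p

theorem isEnd_foldCopy {g : V → V} (hg : isEnd Y g) (i j : Fin n) :
    isEnd (nCopies n Y) (foldCopy i j g) := by
  rintro ⟨k, a⟩ ⟨k', b⟩ ⟨rfl, hab⟩
  by_cases hk : k = i
  · simp only [foldCopy, if_pos hk]
    exact ⟨rfl, hg a b hab⟩
  · simp only [foldCopy, if_neg hk]
    exact ⟨rfl, hab⟩

theorem foldCopy_apply_self (i j : Fin n) (g : V → V) (a : V) :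
    foldCopy i j g (i, a) = (j, g a) :=
  if_pos rfl

theorem foldCopy_apply_of_ne {i k : Fin n} (hk : k ≠ i) (j : Fin n) (g : V → V) (a : V) :
    foldCopy i j g (k, a) = (k, a) :=
  if_neg hk

end nCopies

theorem stmt19_general {V : Type*} (Y : SimpleGraph V)
    (hcore : ∀ f, isEnd Y f → Function.Bijective f)
    (htrans : ∀ a b : V, ∃ e : Y ≃g Y, e a = b)
    (n : ℕ) :
    ∀ v w : Fin n × V, v ≠ w →
      ((∃ f, isEnd (nCopies n Y) f ∧ f v = f w) ↔ v.1 ≠ w.1) := by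
  rintro ⟨i, a⟩ ⟨j, b⟩ hvw
  constructor
  · rintro ⟨f, hf, hcollapse⟩
    exact fst_ne_of_isEnd_nCopies_collapse (fun g hg => (hcore g hg).1) hf hvw hcollapse
  · intro hij
    obtain ⟨e, hab⟩ := htrans a b
    refine ⟨foldCopy i j e, isEnd_foldCopy (fun _ _ => e.map_adj_iff.mpr) i j, ?_⟩
    rw [foldCopy_apply_self, foldCopy_apply_of_ne (Ne.symm hij), hab]

/-- if Y is a vertex-transitive core, then the hull of n.Y (n ≥ 2)
is n.K_r: two distinct vertices are collapsed by some endomorphism of n.Y iff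
they lie in different copies of Y. -/
theorem stmt19 {V : Type*} [Fintype V] (Y : SimpleGraph V)
    (hcore : ∀ f, isEnd Y f → Function.Bijective f)
    (htrans : ∀ a b : V, ∃ e : Y ≃g Y, e a = b)
    (n : ℕ) (hn : 2 ≤ n) :
    ∀ v w : Fin n × V, v ≠ w →
      ((∃ f, isEnd (nCopies n Y) f ∧ f v = f w) ↔ v.1 ≠ w.1) :=
  stmt19_general Y hcore htrans n
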